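/- Let ε ≥ 0, γ ≥ 0, and let (h,α,ϑ) be a minimizer of C in 𝓐. Set r_i = h_i·D²m(α+ϑ_i) for i=1,…,n. If, for every i, μ = 1 is not an eigenvalue of the Sturm–Liouville problem −u'' + (r_i⁻ + 1)u = μ(r_i⁺ + 1)u in (0,1), u(0)=0, u'(1)=0, then (h,α,ϑ) is a regular point of 𝓐, i.e. the Fréchet differential DG(h,α,ϑ) : 𝓗 → (H^1_{0L}(I)ⁿ)' is surjective. -/

import Mathlib

open MeasureTheory Set

noncomputable def edot (p q : ℝ × ℝ) : ℝ := p.1 * q.1 + p.2 * q.2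
noncomputable def enorm2 (p : ℝ × ℝ) : ℝ := Real.sqrt (p.1 ^ 2 + p.2 ^ 2)
noncomputable def Dmvec (v : ℝ) : ℝ × ℝ := (-Real.sin v, Real.cos v)
noncomputable def D2mvec (v : ℝ) : ℝ × ℝ := (-Real.cos v, -Real.sin v)

noncomputable def mu01 : Measure ℝ := volume.restrict (Ioo 0 1)

/-- `H^1_{0L}(I)` modelled isometrically by the `L²(I)` space of derivatives. -/
noncomputable abbrev E := Lp ℝ 2 mu01

noncomputable def U (g : E) : ℝ → ℝ := fun t => ∫ s in Ioc 0 t, (g : ℝ → ℝ) s ∂mu01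

/-- The admissible space `𝓗 = ℝ^{2n} × H^1_{0L}(I) × H^1_{0L}(I)ⁿ`. -/
noncomputable abbrev Hn (n : ℕ) := (Fin n → ℝ × ℝ) × E × (Fin n → E)

/-- Weak solution of the state equation. -/
def IsStateSol (p : ℝ × ℝ) (a g : E) : Prop :=
  ∀ w : E, (∫ s, (g : ℝ → ℝ) s * (w : ℝ → ℝ) s ∂mu01)
    - (∫ s, edot p (Dmvec (U a s + U g s)) * U w s ∂mu01) = 0

/-- The admissible set `𝓐`. -/
def Admissible {n : ℕ} (x : Hn n) : Prop := ∀ i, IsStateSol (x.1 i) x.2.1 (x.2.2 i)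

/-- The cost functional. -/
noncomputable def cost {n : ℕ} (tb : Fin n → ℝ → ℝ) (ε γ : ℝ) (x : Hn n) : ℝ :=
  (1 / 2) * ∑ i, (∫ s, (U (x.2.2 i) s - tb i s) ^ 2 ∂mu01)
    + (ε / 2) * (∫ s, ((x.2.1 : ℝ → ℝ) s) ^ 2 ∂mu01)
    + (γ / 2) * ∑ i, (enorm2 (x.1 i)) ^ 2

/-- `⟨DG(h,α,ϑ)(k,β,ι), u⟩`, the Fréchet differential of the constraint mapping. -/
noncomputable def dgFormula {n : ℕ} (x y : Hn n) (u : Fin n → E) : ℝ :=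
  ∑ i, (-(∫ s, edot (y.1 i) (Dmvec (U x.2.1 s + U (x.2.2 i) s)) * U (u i) s ∂mu01))
    + ∑ i, ((∫ s, (y.2.2 i : ℝ → ℝ) s * (u i : ℝ → ℝ) s ∂mu01)
      - ∫ s, edot (x.1 i) (D2mvec (U x.2.1 s + U (x.2.2 i) s))
          * (U (y.2.2 i) s + U y.2.1 s) * U (u i) s ∂mu01)

/-- `μ` is an eigenvalue of the Sturm–Liouville problem
`-u'' + q u = μ r u`, `u(0)=0`, `u'(1)=0` (in the weak sense). -/
def IsEigen (q r : ℝ → ℝ) (μ : ℝ) : Prop :=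
  ∃ g : E, g ≠ 0 ∧ ∀ w : E,
    (∫ s, (g : ℝ → ℝ) s * (w : ℝ → ℝ) s ∂mu01)
      + (∫ s, q s * U g s * U w s ∂mu01)
      = μ * ∫ s, r s * U g s * U w s ∂mu01

/-!
Only the `ϑ`-block of `DG` is needed: with `k = 0` and `β = 0` it suffices to solve, for each `i`,
the weak problem `⟨ι, w⟩ - ∫ rᵢ (U ι) (U w) = T w` for all `w`. Since `U w s = ⟪1_(0,s], w⟫`,
the form `∫ r (U g) (U w)` is `⟪K g, w⟫` for an operator `K` factoring through the primitive map
`E → C[0,1]`, which is compact by Arzelà–Ascoli (primitives of the unit ball are uniformly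
`1/2`-Hölder). By the Fredholm alternative `I - K` is invertible unless `1` is an eigenvalue of `K`,
and since `r = r⁺ - r⁻` an eigenfunction of `K` for `1` is a weak eigenfunction of
`-u'' + (r⁻ + 1) u = (r⁺ + 1) u`.
-/
open scoped InnerProductSpace BoundedContinuousFunction

instance : IsProbabilityMeasure mu01 := ⟨by simp [mu01, Real.volume_Ioo]⟩

lemma Continuous.integrable_mu01 {f : ℝ → ℝ} (hf : Continuous f) : Integrable f mu01 :=
  (hf.integrableOn_Icc (a := 0) (b := 1)).mono_set Ioo_subset_Icc_self

lemma inner_eq_integral (f g : E) : ⟪f, g⟫_ℝ = ∫ s, f s * g s ∂mu01 := by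
  simp only [L2.inner_def, RCLike.inner_apply, conj_trivial, mul_comm]

noncomputable def indicatorIoc (a b : ℝ) : E :=
  indicatorConstLp 2 measurableSet_Ioc (measure_ne_top mu01 (Ioc a b)) 1

lemma norm_indicatorIoc (a b : ℝ) : ‖indicatorIoc a b‖ = √(mu01.real (Ioc a b)) := by
  rw [indicatorIoc, norm_indicatorConstLp two_ne_zero ENNReal.ofNat_ne_top, norm_one, one_mul,
    ENNReal.toReal_ofNat, Real.sqrt_eq_rpow, one_div]

lemma U_eq_inner (w : E) (s : ℝ) : U w s = ⟪indicatorIoc 0 s, w⟫_ℝ :=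
  (L2.inner_indicatorConstLp_one _ _ w).symm

lemma U_sub_U_eq_inner (w : E) {s t : ℝ} (hs : 0 ≤ s) (hst : s ≤ t) :
    U w t - U w s = ⟪indicatorIoc s t, w⟫_ℝ := by
  have hw : Integrable w mu01 := (Lp.memLp w).integrable one_le_two
  rw [indicatorIoc, L2.inner_indicatorConstLp_one, sub_eq_iff_eq_add', U, U,
    ← Ioc_union_Ioc_eq_Ioc hs hst,
    setIntegral_union (Ioc_disjoint_Ioc_of_le le_rfl) measurableSet_Ioc hw.integrableOn
      hw.integrableOn]

lemma abs_U_le (w : E) (s : ℝ) : |U w s| ≤ ‖w‖ := by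
  rw [U_eq_inner]
  calc |⟪indicatorIoc 0 s, w⟫_ℝ| ≤ ‖indicatorIoc 0 s‖ * ‖w‖ := abs_real_inner_le_norm _ _
    _ ≤ 1 * ‖w‖ := by
      gcongr
      rw [norm_indicatorIoc, Real.sqrt_le_one]
      exact measureReal_le_one
    _ = ‖w‖ := one_mul _

lemma abs_U_sub_U_le (w : E) {s t : ℝ} (hs : 0 ≤ s) (ht : 0 ≤ t) :
    |U w t - U w s| ≤ ‖w‖ * √|t - s| := by
  wlog hst : s ≤ t generalizing s t
  · rw [abs_sub_comm, abs_sub_comm t]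
    exact this ht hs (le_of_not_ge hst)
  have hnorm : ‖indicatorIoc s t‖ ≤ √|t - s| := by
    rw [norm_indicatorIoc, abs_of_nonneg (sub_nonneg.2 hst), ← Real.volume_real_Ioc_of_le hst]
    refine Real.sqrt_le_sqrt (ENNReal.toReal_mono measure_Ioc_lt_top.ne ?_)
    exact Measure.restrict_le_self _
  rw [U_sub_U_eq_inner w hs hst, mul_comm]
  exact (abs_real_inner_le_norm _ _).trans (by gcongr)

lemma U_eq_intervalIntegral (w : E) (s : ℝ) : U w s = ∫ x in 0..s, w x ∂mu01 := by
  rcases le_total 0 s with hs | hs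
  · rw [intervalIntegral.integral_of_le hs, U]
  · have hnull : mu01 (Ioc s 0) = 0 := by
      rw [mu01, Measure.restrict_apply measurableSet_Ioc]
      exact measure_mono_null (fun x hx => (hx.1.2.not_gt hx.2.1).elim) measure_empty
    rw [intervalIntegral.integral_of_ge hs, U, Ioc_eq_empty_of_le hs, Measure.restrict_empty,
      integral_zero_measure, Measure.restrict_eq_zero.2 hnull, integral_zero_measure, neg_zero]

@[fun_prop]
lemma continuous_U (w : E) : Continuous (U w) := by
  have hw : Integrable w mu01 := (Lp.memLp w).integrable one_le_two
  rw [funext (U_eq_intervalIntegral w)]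
  have : NullSingletonClass mu01 := by unfold mu01; infer_instance
  exact intervalIntegral.continuous_primitive (fun _ _ => hw.intervalIntegrable) 0

lemma U_zero : U 0 = 0 := by
  ext s
  simp [U_eq_inner]

lemma U_add (w z : E) : U (w + z) = U w + U z := by
  ext s
  simp only [U_eq_inner, inner_add_right, Pi.add_apply]

lemma U_smul (c : ℝ) (w : E) : U (c • w) = c • U w := by
  ext s
  simp only [U_eq_inner, inner_smul_right, Pi.smul_apply, smul_eq_mul]

noncomputable def primitiveCLM : E →L[ℝ] (Icc (0 : ℝ) 1 →ᵇ ℝ) :=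
  LinearMap.mkContinuous
    { toFun := fun w => .mkOfCompact ((ContinuousMap.mk (U w) (continuous_U w)).restrict _)
      map_add' := fun w z => by ext t; simp [U_add]
      map_smul' := fun c w => by ext t; simp [U_smul] }
    1 (fun w => by
      rw [one_mul]
      exact (BoundedContinuousFunction.norm_le (norm_nonneg _)).2 fun t => abs_U_le w t)

lemma primitiveCLM_apply (w : E) (t : Icc (0 : ℝ) 1) : primitiveCLM w t = U w t := rfl

theorem isCompactOperator_primitiveCLM : IsCompactOperator primitiveCLM := by
  refine (isCompactOperator_iff_image_closedBall_subset_compact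
    (primitiveCLM : E →ₗ[ℝ] Icc (0 : ℝ) 1 →ᵇ ℝ) one_pos).2 ?_
  refine ⟨closure (primitiveCLM '' Metric.closedBall 0 1), ?_, subset_closure⟩
  refine BoundedContinuousFunction.arzela_ascoli (Icc (-1) 1) isCompact_Icc _ ?_ ?_
  · rintro _ t ⟨w, hw, rfl⟩
    exact abs_le.1 ((abs_U_le w t).trans (mem_closedBall_zero_iff.1 hw))
  refine (Metric.uniformEquicontinuous_iff.2 fun ε hε => ⟨ε ^ 2, by positivity, ?_⟩).equicontinuous
  rintro s t hst ⟨_, w, hw, rfl⟩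
  calc dist (U w s) (U w t) ≤ ‖w‖ * √|s - t| := abs_U_sub_U_le w t.2.1 s.2.1
    _ ≤ 1 * √(dist s t) := by
      gcongr
      · exact mem_closedBall_zero_iff.1 hw
      · rw [Subtype.dist_eq, Real.dist_eq]
    _ < ε := by
      rw [one_mul, Real.sqrt_lt' hε]
      exact hst

lemma continuous_IccExtend_mul_U (f : Icc (0 : ℝ) 1 →ᵇ ℝ) (z : E) :
    Continuous fun s => IccExtend zero_le_one f s * U z s :=
  (continuous_IccExtend_iff.2 f.continuous).mul (continuous_U z)

noncomputable def pairingCLM : (Icc (0 : ℝ) 1 →ᵇ ℝ) →L[ℝ] StrongDual ℝ E :=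
  LinearMap.mkContinuous₂
    (LinearMap.mk₂ ℝ (fun f z => ∫ s, IccExtend zero_le_one f s * U z s ∂mu01)
      (fun f g z => by
        simp only [IccExtend, Function.comp_apply, BoundedContinuousFunction.coe_add,
          Pi.add_apply, add_mul]
        exact integral_add (continuous_IccExtend_mul_U f z).integrable_mu01
          (continuous_IccExtend_mul_U g z).integrable_mu01)
      (fun c f z => by
        simp only [IccExtend, Function.comp_apply, BoundedContinuousFunction.coe_smul,
          smul_eq_mul, mul_assoc, integral_const_mul])
      (fun f z z' => by
        simp only [U_add, Pi.add_apply, mul_add]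
        exact integral_add (continuous_IccExtend_mul_U f z).integrable_mu01
          (continuous_IccExtend_mul_U f z').integrable_mu01)
      (fun c f z => by
        simp only [U_smul, Pi.smul_apply, smul_eq_mul, mul_left_comm _ c, integral_const_mul]))
    1 (fun f z => by
      refine (norm_integral_le_of_norm_le_const (.of_forall fun s => ?_)).trans_eq
        (by rw [probReal_univ, mul_one, one_mul])
      rw [norm_mul]
      exact mul_le_mul (f.norm_coe_le_norm _) (abs_U_le z s) (norm_nonneg _) (norm_nonneg _))

lemma pairingCLM_apply (f : Icc (0 : ℝ) 1 →ᵇ ℝ) (z : E) :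
    pairingCLM f z = ∫ s, IccExtend zero_le_one f s * U z s ∂mu01 := rfl

noncomputable def weightedOp (ρ : Icc (0 : ℝ) 1 →ᵇ ℝ) : E →L[ℝ] E :=
  ((InnerProductSpace.toDual ℝ E).symm.toContinuousLinearEquiv.toContinuousLinearMap ∘L
    pairingCLM ∘L ContinuousLinearMap.mul ℝ _ ρ) ∘L primitiveCLM

theorem isCompactOperator_weightedOp (ρ : Icc (0 : ℝ) 1 →ᵇ ℝ) :
    IsCompactOperator (weightedOp ρ) := by
  rw [weightedOp, ContinuousLinearMap.coe_comp]
  exact isCompactOperator_primitiveCLM.clm_comp _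

lemma inner_weightedOp {ρ : Icc (0 : ℝ) 1 →ᵇ ℝ} {r : ℝ → ℝ} (hρ : ∀ t, ρ t = r t) (w z : E) :
    ⟪weightedOp ρ w, z⟫_ℝ = ∫ s, r s * U w s * U z s ∂mu01 := by
  simp only [weightedOp, ContinuousLinearMap.comp_apply, ContinuousLinearEquiv.coe_coe,
    LinearIsometryEquiv.coe_toContinuousLinearEquiv, InnerProductSpace.toDual_symm_apply,
    pairingCLM_apply]
  refine integral_congr_ae ?_
  filter_upwards [(ae_restrict_mem measurableSet_Ioo : ∀ᵐ s ∂mu01, s ∈ Ioo (0 : ℝ) 1)] with s hs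
  rw [IccExtend_of_mem _ _ (Ioo_subset_Icc_self hs), ContinuousLinearMap.mul_apply',
    BoundedContinuousFunction.coe_mul, Pi.mul_apply, hρ, primitiveCLM_apply]

lemma isEigen_of_weak_eigenfunction {r : ℝ → ℝ} (hr : Continuous r) {g : E} (hg : g ≠ 0)
    (h : ∀ w, ⟪g, w⟫_ℝ = ∫ s, r s * U g s * U w s ∂mu01) :
    IsEigen (fun s => max (-r s) 0 + 1) (fun s => max (r s) 0 + 1) 1 := by
  refine ⟨g, hg, fun w => ?_⟩
  have hparts : ∀ s, max (r s) 0 + 1 = r s + (max (-r s) 0 + 1) := fun s => by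
    linarith [max_zero_sub_max_neg_zero_eq_self (r s)]
  rw [← inner_eq_integral, h w, one_mul,
    ← integral_add (by fun_prop : Continuous _).integrable_mu01
      (by fun_prop : Continuous _).integrable_mu01]
  simp only [hparts, add_mul]

theorem exists_weak_solution {r : ℝ → ℝ} (hr : Continuous r)
    (h : ¬ IsEigen (fun s => max (-r s) 0 + 1) (fun s => max (r s) 0 + 1) 1)
    (T : StrongDual ℝ E) :
    ∃ g : E, ∀ w : E, (∫ s, g s * w s ∂mu01) - (∫ s, r s * U g s * U w s ∂mu01) = T w := by
  let ρ : Icc (0 : ℝ) 1 →ᵇ ℝ := .mkOfCompact ((ContinuousMap.mk r hr).restrict _)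
  have hK := inner_weightedOp (ρ := ρ) (r := r) (fun _ => rfl)
  rcases (isCompactOperator_weightedOp ρ).hasEigenvalue_or_mem_resolventSet one_ne_zero with
    heig | hres
  · obtain ⟨g, hg_mem, hg0⟩ := heig.exists_hasEigenvector
    have hKg : weightedOp ρ g = g := by simpa using Module.End.mem_eigenspace_iff.1 hg_mem
    exact (h (isEigen_of_weak_eigenfunction hr hg0 fun w => by rw [← hK, hKg])).elim
  · obtain ⟨g, hg⟩ := (ContinuousLinearMap.isUnit_iff_bijective.1
      (spectrum.mem_resolventSet_iff.1 hres)).2 ((InnerProductSpace.toDual ℝ E).symm T)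
    refine ⟨g, fun w => ?_⟩
    rw [← inner_eq_integral, ← hK, ← inner_sub_left, ← InnerProductSpace.toDual_symm_apply, ← hg]
    simp

theorem minimizer_regular_point_general (n : ℕ) (x : Hn n)
    (heig : ∀ i, ¬ IsEigen
      (fun s => max (-(edot (x.1 i) (D2mvec (U x.2.1 s + U (x.2.2 i) s)))) 0 + 1)
      (fun s => max (edot (x.1 i) (D2mvec (U x.2.1 s + U (x.2.2 i) s))) 0 + 1) 1) :
    ∀ T : (Fin n → E) →L[ℝ] ℝ, ∃ y : Hn n, ∀ u : Fin n → E, dgFormula x y u = T u := by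
  intro T
  have hr : ∀ i, Continuous fun s => edot (x.1 i) (D2mvec (U x.2.1 s + U (x.2.2 i) s)) :=
    fun i => by simp only [edot, D2mvec]; fun_prop
  choose g hg using fun i =>
    exists_weak_solution (hr i) (heig i) (T ∘L ContinuousLinearMap.single ℝ (fun _ => E) i)
  refine ⟨(0, 0, g), fun u => ?_⟩
  have hedot : ∀ q, edot 0 q = 0 := fun q => by simp [edot]
  calc dgFormula x (0, 0, g) u
      = ∑ i, ((∫ s, g i s * u i s ∂mu01) - ∫ s, edot (x.1 i) (D2mvec (U x.2.1 s + U (x.2.2 i) s))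
          * U (g i) s * U (u i) s ∂mu01) := by
        simp [dgFormula, hedot, U_zero]
    _ = ∑ i, T (Pi.single i (u i)) := Finset.sum_congr rfl fun i _ => hg i (u i)
    _ = T u := by rw [← map_sum, Finset.univ_sum_single]

/-- Theorem `lagmul2` (i): if `(h,α,ϑ)` is a minimizer of `C` in `𝓐`
and, for each `i`, `μ = 1` is not an eigenvalue of
`-u'' + (rᵢ⁻+1)u = μ(rᵢ⁺+1)u`, `u(0)=0`, `u'(1)=0`, with
`rᵢ = hᵢ·D²m(α+ϑᵢ)`, then `(h,α,ϑ)` is a regular point of `𝓐`: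
the differential `DG(h,α,ϑ) : 𝓗 → (H^1_{0L}(I)ⁿ)'` is surjective. -/
theorem minimizer_regular_point (n : ℕ) (ε γ : ℝ) (hε : 0 ≤ ε) (hγ : 0 ≤ γ)
    (tb : Fin n → ℝ → ℝ) (htb : ∀ i, MemLp (tb i) 2 mu01)
    (x : Hn n) (hadm : Admissible x)
    (hmin : ∀ y : Hn n, Admissible y → cost tb ε γ x ≤ cost tb ε γ y)
    (heig : ∀ i, ¬ IsEigen
      (fun s => max (-(edot (x.1 i) (D2mvec (U x.2.1 s + U (x.2.2 i) s)))) 0 + 1)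
      (fun s => max (edot (x.1 i) (D2mvec (U x.2.1 s + U (x.2.2 i) s))) 0 + 1) 1) :
    ∀ T : (Fin n → E) →L[ℝ] ℝ, ∃ y : Hn n, ∀ u : Fin n → E, dgFormula x y u = T u :=
  minimizer_regular_point_general n x heig
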